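/- Let d ≥ 1 and let α, β be commuting variables. Define c_{d+1} = ∏_{i=0}^{d} (iα + (d-i)β) = (dα)((d-1)α + β)⋯(α + (d-1)β)(dβ). Then c_{d+1}, viewed as a polynomial in the elementary symmetric functions s = α + β and p = αβ, has all coefficients nonnegative, and the coefficient of p·s^{d-1} is strictly positive. -/

import Mathlib

/-!
Pairing the roots `i` and `d - i` gives
`(iα + (d - i)β)((d - i)α + iβ) = i(d - i)s² + (d - 2i)²p`, so `c_{d+1}` is the product of these
quadratics over `i < (d + 1) / 2`, times the unpaired middle root `(d / 2)s` when `d` is even.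
It is therefore the image of a polynomial in `s, p` with natural coefficients. The `i = 0` factor
is `d²p` and every other one contains `i(d - i)s²` with `i(d - i) > 0`; choosing `p` from the first
factor and `s²` (or `s`) from the others contributes positively to the coefficient of `p s^{d-1}`,
and over `ℕ` nothing can cancel it.
-/

open MvPolynomial

/-- The top Chern class `c_{d+1}(Sym^d S^*) = ∏_{i=0}^{d} (iα + (d-i)β)` via the splitting
principle, with `α = X 0`, `β = X 1`. -/
noncomputable def cTop (d : ℕ) : MvPolynomial (Fin 2) ℤ :=
  ∏ i ∈ Finset.range (d + 1), (C (i : ℤ) * X 0 + C ((d : ℤ) - (i : ℤ)) * X 1)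

open Finset

theorem Finset.prod_range_succ_eq_prod_pairs {M : Type*} [CommMonoid M] (f : ℕ → M) (n : ℕ) :
    ∏ i ∈ range (n + 1), f i =
      (∏ i ∈ range ((n + 1) / 2), f i * f (n - i)) * if Even n then f (n / 2) else 1 := by
  have reflect {a m : ℕ} (h : a + m = n + 1) :
      ∏ j ∈ range m, f (a + j) = ∏ i ∈ range m, f (n - i) := by
    rw [← prod_range_reflect]
    exact prod_congr rfl fun j hj => by rw [mem_range] at hj; congr 1; omega
  obtain ⟨m, rfl | rfl⟩ := Nat.even_or_odd' n
  · rw [show (2 * m + 1) / 2 = m by omega, show 2 * m + 1 = m + 1 + m by omega, prod_range_add,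
      reflect (by omega), prod_range_succ, mul_right_comm, ← prod_mul_distrib]
    simp
  · rw [show (2 * m + 1 + 1) / 2 = m + 1 by omega, show 2 * m + 1 + 1 = m + 1 + (m + 1) by omega,
      prod_range_add, reflect (by omega), ← prod_mul_distrib]
    simp

section CanonicallyOrdered

variable {σ ι R : Type*} [CommSemiring R] [PartialOrder R] [CanonicallyOrderedAdd R]
  [IsOrderedRing R]

theorem MvPolynomial.coeff_mul_coeff_le_coeff_mul (f g : MvPolynomial σ R) (m n : σ →₀ ℕ) :
    f.coeff m * g.coeff n ≤ (f * g).coeff (m + n) := by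
  classical
  rw [coeff_mul]
  exact single_le_sum (f := fun x => f.coeff x.1 * g.coeff x.2) (fun _ _ => zero_le)
    (mem_antidiagonal.mpr rfl : (m, n) ∈ antidiagonal (m + n))

theorem MvPolynomial.prod_coeff_le_coeff_prod (s : Finset ι) (f : ι → MvPolynomial σ R)
    (m : ι → σ →₀ ℕ) : ∏ i ∈ s, (f i).coeff (m i) ≤ (∏ i ∈ s, f i).coeff (∑ i ∈ s, m i) := by
  classical
  induction s using Finset.induction_on with
  | empty => simp
  | insert a s ha ih =>
    rw [prod_insert ha, prod_insert ha, sum_insert ha]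
    exact (mul_le_mul_of_nonneg_left ih zero_le).trans (coeff_mul_coeff_le_coeff_mul _ _ _ _)

end CanonicallyOrdered

namespace ChernTop

noncomputable def root (d i : ℕ) : MvPolynomial (Fin 2) ℤ :=
  C (i : ℤ) * X 0 + C ((d : ℤ) - i) * X 1

noncomputable def toRoots : MvPolynomial (Fin 2) ℕ →+* MvPolynomial (Fin 2) ℤ :=
  (bind₁ fun k : Fin 2 => if k = 0 then X 0 + X 1 else X 0 * X 1).toRingHom.comp
    (map (Nat.castRingHom ℤ))

lemma toRoots_C (a : ℕ) : toRoots (C a) = C (a : ℤ) := by simp [toRoots]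
lemma toRoots_X_zero : toRoots (X 0) = X 0 + X 1 := by simp [toRoots]
lemma toRoots_X_one : toRoots (X 1) = X 0 * X 1 := by simp [toRoots]

noncomputable def pairFactor (d i : ℕ) : MvPolynomial (Fin 2) ℕ :=
  C (i * (d - i)) * X 0 ^ 2 + C ((d - 2 * i) ^ 2) * X 1

noncomputable def middleFactor (d : ℕ) : MvPolynomial (Fin 2) ℕ :=
  if Even d then C (d / 2) * X 0 else 1

noncomputable def chernPoly (d : ℕ) : MvPolynomial (Fin 2) ℕ :=
  (∏ i ∈ range ((d + 1) / 2), pairFactor d i) * middleFactor d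

lemma toRoots_X_oneairFactor {d i : ℕ} (h : 2 * i ≤ d) :
    toRoots (pairFactor d i) = root d i * root d (d - i) := by
  simp only [pairFactor, root, map_add, map_mul, map_pow, toRoots_C, toRoots_X_zero, toRoots_X_one]
  push_cast [h, show i ≤ d by omega]
  simp only [map_sub, map_mul, map_natCast, map_ofNat]
  ring

lemma toRoots_middleFactor (d : ℕ) :
    toRoots (middleFactor d) = if Even d then root d (d / 2) else 1 := by
  rcases d.even_or_odd' with ⟨m, rfl | rfl⟩
  · simp only [middleFactor, root, even_two_mul, if_true, map_mul, toRoots_C, toRoots_X_zero]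
    push_cast [show 2 * m / 2 = m by omega]
    simp only [map_sub, map_mul, map_natCast, map_ofNat]
    ring
  · simp [middleFactor]

lemma toRoots_chernPoly (d : ℕ) : toRoots (chernPoly d) = cTop d := by
  rw [cTop, prod_range_succ_eq_prod_pairs, chernPoly, map_mul, map_prod, toRoots_middleFactor]
  congr 1
  exact prod_congr rfl fun i hi => toRoots_X_oneairFactor (by rw [mem_range] at hi; omega)

lemma coeff_pairFactor_X_zero_sq (d i : ℕ) :
    (pairFactor d i).coeff (Finsupp.single 0 2) = i * (d - i) := by
  classical
  simp only [pairFactor, coeff_add, coeff_C_mul, coeff_X_pow, coeff_X]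
  simp [Finsupp.single_eq_single_iff]

lemma coeff_pairFactor_X_one (d i : ℕ) :
    (pairFactor d i).coeff (Finsupp.single 1 1) = (d - 2 * i) ^ 2 := by
  classical
  simp only [pairFactor, coeff_add, coeff_C_mul, coeff_X_pow, coeff_X]
  simp [Finsupp.single_eq_single_iff]

lemma coeff_middleFactor_pos {d : ℕ} (hd : 1 ≤ d) :
    0 < (middleFactor d).coeff (Finsupp.single 0 (if Even d then 1 else 0)) := by
  by_cases h : Even d
  · simp only [middleFactor, h, if_true, coeff_C_mul, coeff_X_same, mul_one]
    obtain ⟨m, rfl⟩ := h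
    omega
  · simp [middleFactor, h, coeff_one]

lemma coeff_chernPoly_pos {d : ℕ} (hd : 1 ≤ d) :
    0 < (chernPoly d).coeff (Finsupp.single 0 (d - 1) + Finsupp.single 1 1) := by
  obtain ⟨k, hk⟩ : ∃ k, (d + 1) / 2 = k + 1 := ⟨(d + 1) / 2 - 1, by omega⟩
  let exps : ℕ → Fin 2 →₀ ℕ := fun i => if i = 0 then Finsupp.single 1 1 else Finsupp.single 0 2
  let midExp := if Even d then 1 else 0
  have hexps : ∑ i ∈ range (k + 1), exps i = Finsupp.single 0 (2 * k) + Finsupp.single 1 1 := by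
    simp [exps, sum_range_succ', Finsupp.smul_single, mul_comm]
  have hmidExp : d - 1 = 2 * k + midExp := by
    rcases d.even_or_odd' with ⟨j, rfl | rfl⟩ <;>
      simp only [midExp, even_two_mul, Nat.not_even_two_mul_add_one, if_true, if_false] <;> omega
  have hdeg : Finsupp.single 0 (d - 1) + Finsupp.single 1 1 =
      ∑ i ∈ range (k + 1), exps i + Finsupp.single 0 midExp := by
    rw [hexps, hmidExp, Finsupp.single_add, add_right_comm]
  have hpairs : 0 < ∏ i ∈ range (k + 1), (pairFactor d i).coeff (exps i) := by
    refine prod_pos fun i hi => ?_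
    rw [mem_range] at hi
    by_cases h0 : i = 0
    · simp only [exps, h0, if_true, coeff_pairFactor_X_one]; positivity
    · simp only [exps, h0, if_false, coeff_pairFactor_X_zero_sq]
      exact Nat.mul_pos (by omega) (by omega)
  calc 0 < (∏ i ∈ range (k + 1), (pairFactor d i).coeff (exps i)) *
          (middleFactor d).coeff (Finsupp.single 0 midExp) :=
        Nat.mul_pos hpairs (coeff_middleFactor_pos hd)
    _ ≤ (∏ i ∈ range (k + 1), pairFactor d i).coeff (∑ i ∈ range (k + 1), exps i) *
          (middleFactor d).coeff (Finsupp.single 0 midExp) :=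
        Nat.mul_le_mul_right _ (prod_coeff_le_coeff_prod _ _ _)
    _ ≤ _ := by rw [hdeg, chernPoly, hk]; exact coeff_mul_coeff_le_coeff_mul _ _ _ _

end ChernTop

open ChernTop in
/-- `c_{d+1} = ∏_{i=0}^{d}(iα + (d-i)β)`, viewed as a polynomial `F` in
`s = α + β` and `p = αβ`, has all coefficients nonnegative, and the coefficient of
`p · s^{d-1}` is strictly positive. (In `F`, variable `0` is `s` and variable `1` is `p`.) -/
theorem chern_class_positivity (d : ℕ) (hd : 1 ≤ d) :
    ∃ F : MvPolynomial (Fin 2) ℤ,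
      (∀ mo, 0 ≤ F.coeff mo) ∧
      0 < F.coeff (Finsupp.single 0 (d - 1) + Finsupp.single 1 1) ∧
      MvPolynomial.bind₁
        (fun k : Fin 2 => if k = 0 then X 0 + X 1 else X 0 * X 1) F = cTop d := by
  refine ⟨map (Nat.castRingHom ℤ) (chernPoly d), fun mo => ?_, ?_, toRoots_chernPoly d⟩
  · rw [coeff_map]
    exact Int.natCast_nonneg _
  · rw [coeff_map]
    exact Int.natCast_pos.mpr (coeff_chernPoly_pos hd)
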